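/- Let n ≥ 1 and let G be a facet of Δ(n) with |G| = r ≥ 2. Then the following are equivalent: (1) for every vertex v ∈ G there exists a facet H of Δ(n) preceding G in the order O with G \ {v} ⊆ H; (2) every vertex of G satisfies the B-condition in G. (Condition (1) says G attaches along its entire boundary in the shelling order O, i.e., G is a homology facet.) -/

import Mathlib

/-!
Write `v = v_ℓ` and let `p` be its predecessor `v_{ℓ-1}` (or `(0,0,0)` when `ℓ = 1`). If a facet `H`
contains `G \ {v}`, every vertex `u ∈ H` outside `G` is comparable with `G \ {v}` but, by
maximality of `G`, not with `v`; hence `u` lies strictly above everything below `v`, in particular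
above `p`. The B-condition fails at `v` exactly when `v = p + (1,1,1)`. In that case every such `u`
is componentwise `≥ v`, so two of them cannot be comparable without one being `> v`; thus
`H = G \ {v} ∪ {u}` with `u ≥ v`, whose σ-word is not smaller than that of `G`, and `H` does not
precede `G`. If the B-condition holds, `u = p + (1,1,1)` is componentwise `< v`, `G \ {v} ∪ {u}` is
a face with smaller σ-word, and every facet containing it precedes `G`.
-/

/-- Vertices of `Δ(n)`: integer triples. -/
abbrev V : Type := ℕ × ℕ × ℕ

/-- The strict componentwise order on triples. -/
def slt (u v : V) : Prop := u.1 < v.1 ∧ u.2.1 < v.2.1 ∧ u.2.2 < v.2.2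

/-- A face of `Δ(n)`: a finite subset of `{1,…,n}³` that is a chain under `slt`. -/
def IsFace (n : ℕ) (F : Finset V) : Prop :=
  (∀ v ∈ F, v.1 ∈ Finset.Icc 1 n ∧ v.2.1 ∈ Finset.Icc 1 n ∧ v.2.2 ∈ Finset.Icc 1 n) ∧
  (∀ u ∈ F, ∀ v ∈ F, u ≠ v → slt u v ∨ slt v u)

/-- A facet of `Δ(n)`: an inclusion-maximal face. -/
def IsFacet (n : ℕ) (F : Finset V) : Prop :=
  IsFace n F ∧ ∀ G : Finset V, IsFace n G → F ⊆ G → F = G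

/-- The σ-word of a list of vertices: concatenate the coordinates in order. -/
def sigmaWord (L : List V) : List ℕ :=
  L.foldr (fun v acc => v.1 :: v.2.1 :: v.2.2 :: acc) []

/-- `F` precedes `G` in the order `O`: facets of larger cardinality come first, and
facets of equal cardinality are ordered by lexicographic order on their σ-words. -/
def OPrec (F G : Finset V) : Prop :=
  G.card < F.card ∨
    (F.card = G.card ∧ ∃ LF LG : List V, LF.Chain' slt ∧ LG.Chain' slt ∧
      LF.toFinset = F ∧ LG.toFinset = G ∧
      List.Lex (· < ·) (sigmaWord LF) (sigmaWord LG))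

/-- The `ℓ`-th vertex of the (increasingly sorted) list `L` satisfies the B-condition. -/
def BCond (L : List V) (ℓ : ℕ) (h : ℓ < L.length) : Prop :=
  (ℓ = 0 ∧ (1 < (L.get ⟨ℓ, h⟩).1 ∨ 1 < (L.get ⟨ℓ, h⟩).2.1 ∨ 1 < (L.get ⟨ℓ, h⟩).2.2)) ∨
  (0 < ℓ ∧
    (1 < (L.get ⟨ℓ, h⟩).1 - (L.get ⟨ℓ - 1, by omega⟩).1 ∨
     1 < (L.get ⟨ℓ, h⟩).2.1 - (L.get ⟨ℓ - 1, by omega⟩).2.1 ∨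
     1 < (L.get ⟨ℓ, h⟩).2.2 - (L.get ⟨ℓ - 1, by omega⟩).2.2))

open Finset

lemma slt_irrefl (u : V) : ¬ slt u u := fun h => lt_irrefl _ h.1

lemma slt_trans {u v w : V} (huv : slt u v) (hvw : slt v w) : slt u w :=
  ⟨huv.1.trans hvw.1, huv.2.1.trans hvw.2.1, huv.2.2.trans hvw.2.2⟩

instance : IsStrictOrder V slt where
  irrefl := slt_irrefl
  trans _ _ _ := slt_trans

lemma le_of_slt {u v : V} (h : slt u v) : u ≤ v := by
  simp only [Prod.le_def]; exact ⟨h.1.le, h.2.1.le, h.2.2.le⟩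

lemma slt_of_slt_of_le {u v w : V} (huv : slt u v) (hvw : v ≤ w) : slt u w := by
  simp only [Prod.le_def] at hvw
  exact ⟨huv.1.trans_le hvw.1, huv.2.1.trans_le hvw.2.1, huv.2.2.trans_le hvw.2.2⟩

lemma slt_of_le_of_slt {u v w : V} (huv : u ≤ v) (hvw : slt v w) : slt u w := by
  simp only [Prod.le_def] at huv
  exact ⟨huv.1.trans_lt hvw.1, huv.2.1.trans_lt hvw.2.1, huv.2.2.trans_lt hvw.2.2⟩

lemma slt_inf {x u v : V} (hu : slt x u) (hv : slt x v) : slt x (u ⊓ v) :=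
  ⟨lt_min hu.1 hv.1, lt_min hu.2.1 hv.2.1, lt_min hu.2.2 hv.2.2⟩

lemma slt_iff_add_one_le {u v : V} : slt u v ↔ u + 1 ≤ v := by
  simp only [slt, Prod.le_def, Prod.fst_add, Prod.snd_add, Prod.fst_one, Prod.snd_one,
    Nat.add_one_le_iff]

def cube (n : ℕ) : Finset V := Icc 1 (n, n, n)

lemma isFace_iff {n : ℕ} {F : Finset V} : IsFace n F ↔ F ⊆ cube n ∧ IsChain slt (F : Set V) := by
  have hmem (v : V) : v ∈ cube n ↔
      v.1 ∈ Icc 1 n ∧ v.2.1 ∈ Icc 1 n ∧ v.2.2 ∈ Icc 1 n := by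
    simp only [cube, mem_Icc, Prod.le_def, Prod.fst_one, Prod.snd_one]
    tauto
  simp only [IsFace, subset_iff, hmem]
  rfl

lemma IsFace.mono {n : ℕ} {F G : Finset V} (hF : IsFace n F) (hGF : G ⊆ F) : IsFace n G := by
  rw [isFace_iff] at hF ⊢
  exact ⟨hGF.trans hF.1, hF.2.mono (coe_subset.2 hGF)⟩

lemma IsFace.exists_isFacet_superset {n : ℕ} {F : Finset V} (hF : IsFace n F) :
    ∃ H, IsFacet n H ∧ F ⊆ H := by
  classical
  set S := (cube n).powerset.filter fun G => IsFace n G ∧ F ⊆ G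
  have hmemS {G : Finset V} : G ∈ S ↔ IsFace n G ∧ F ⊆ G := by
    simp only [S, mem_filter, mem_powerset, and_iff_right_iff_imp]
    exact fun hG => (isFace_iff.1 hG.1).1
  obtain ⟨H, hHS, hmax⟩ := S.exists_max_image card ⟨F, hmemS.2 ⟨hF, subset_rfl⟩⟩
  obtain ⟨hH, hFH⟩ := hmemS.1 hHS
  refine ⟨H, ⟨hH, fun G hG hHG => ?_⟩, hFH⟩
  exact eq_of_subset_of_card_le hHG (hmax G (hmemS.2 ⟨hG, hFH.trans hHG⟩))

lemma IsFacet.not_isFace_insert {n : ℕ} {G : Finset V} (hG : IsFacet n G) {u : V}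
    (hu : u ∉ G) : ¬ IsFace n (insert u G) :=
  fun h => hu (hG.2 _ h (subset_insert u G) ▸ mem_insert_self u G)

lemma IsFacet.incomparable_of_isFace_insert_erase {n : ℕ} {G : Finset V} (hG : IsFacet n G)
    {u v : V} (hu : u ∉ G) (hF : IsFace n (insert u (G.erase v))) : ¬ slt u v ∧ ¬ slt v u := by
  rw [← not_or]
  intro huv
  apply hG.not_isFace_insert hu
  rw [isFace_iff] at hF ⊢
  obtain ⟨hGcube, hGchain⟩ := isFace_iff.1 hG.1
  refine ⟨insert_subset (hF.1 (mem_insert_self _ _)) hGcube, ?_⟩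
  rw [coe_insert]
  refine hGchain.insert fun x hx hux => ?_
  by_cases hxv : x = v
  · exact hxv ▸ huv
  · exact hF.2 (mem_insert_self _ _) (mem_insert_of_mem (mem_erase.2 ⟨hxv, hx⟩)) hux

lemma IsFacet.slt_of_isFace_insert_erase {n : ℕ} {G : Finset V} (hG : IsFacet n G) {u v : V}
    (hu : u ∉ G) (hF : IsFace n (insert u (G.erase v))) {x : V} (hx : x ∈ G) :
    (slt x v → slt x u) ∧ (slt v x → slt u x) := by
  obtain ⟨huv, hvu⟩ := hG.incomparable_of_isFace_insert_erase hu hF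
  have hcomp (hxv : x ≠ v) : slt u x ∨ slt x u :=
    hF.2 u (mem_insert_self _ _) x (mem_insert_of_mem (mem_erase.2 ⟨hxv, hx⟩))
      (ne_of_mem_of_not_mem hx hu).symm
  constructor
  · intro hxv
    exact (hcomp (ne_of_irrefl hxv)).resolve_left fun hux => huv (slt_trans hux hxv)
  · intro hvx
    exact (hcomp (ne_of_irrefl hvx).symm).resolve_right fun hxu => hvu (slt_trans hvx hxu)

namespace List

lemma eq_of_pairwise_slt_of_toFinset_eq {L M : List V} (hL : L.Pairwise slt)
    (hM : M.Pairwise slt) (h : L.toFinset = M.toFinset) : L = M :=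
  (perm_of_nodup_nodup_toFinset_eq hL.nodup hM.nodup h).eq_of_pairwise' hL hM

lemma toFinset_set_of_nodup {L : List V} (hL : L.Nodup) {ℓ : ℕ} (hℓ : ℓ < L.length) (w : V) :
    (L.set ℓ w).toFinset = insert w (L.toFinset.erase L[ℓ]) := by
  ext x
  simp only [mem_toFinset, mem_insert, mem_erase, mem_iff_getElem, length_set, getElem_set]
  grind [Nodup.getElem_inj_iff]

lemma Pairwise.slt_set {L : List V} (hL : L.Pairwise slt) {ℓ : ℕ} (hℓ : ℓ < L.length) {w : V}
    (hw : ∀ x ∈ L, (slt x L[ℓ] → slt x w) ∧ (slt L[ℓ] x → slt w x)) :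
    (L.set ℓ w).Pairwise slt := by
  rw [pairwise_iff_getElem] at hL ⊢
  intro i j hi hj hij
  simp only [length_set] at hi hj
  simp only [getElem_set]
  split_ifs with hi' hj' hj'
  · omega
  · exact (hw _ (getElem_mem hj)).2 (hi' ▸ hL i j hi hj hij)
  · exact (hw _ (getElem_mem hi)).1 (hj' ▸ hL i j hi hj hij)
  · exact hL i j hi hj hij

lemma Pairwise.isChain_coe_toFinset {L : List V} (hL : L.Pairwise slt) :
    _root_.IsChain slt (L.toFinset : Set V) := by
  rw [coe_toFinset]
  exact @Pairwise.set_pairwise _ _ _ (hL.imp Or.inl) ⟨fun _ _ => Or.symm⟩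

lemma Pairwise.getElem_le_getElem {L : List V} (hL : L.Pairwise slt) {i j : ℕ}
    (hi : i < L.length) (hj : j < L.length) (hij : i ≤ j) : L[i] ≤ L[j] := by
  rcases hij.lt_or_eq with hij | rfl
  · exact le_of_slt (pairwise_iff_getElem.1 hL i j hi hj hij)
  · exact le_rfl

lemma Pairwise.lt_of_slt_getElem {L : List V} (hL : L.Pairwise slt) {i j : ℕ}
    (hi : i < L.length) (hj : j < L.length) (h : slt L[i] L[j]) : i < j :=
  Nat.lt_of_not_le fun hji => slt_irrefl _ (slt_of_slt_of_le h (hL.getElem_le_getElem hj hi hji))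

end List

lemma sigmaWord_cons (v : V) (L : List V) :
    sigmaWord (v :: L) = v.1 :: v.2.1 :: v.2.2 :: sigmaWord L := rfl

lemma lex_sigmaWord_cons_of_lt {v w : V} (h : w < v) (L : List V) :
    List.Lex (· < ·) (sigmaWord (w :: L)) (sigmaWord (v :: L)) := by
  obtain ⟨⟨h1, h2, h3⟩, hne⟩ : (w.1 ≤ v.1 ∧ w.2.1 ≤ v.2.1 ∧ w.2.2 ≤ v.2.2) ∧ w ≠ v := by
    simpa only [lt_iff_le_and_ne, Prod.le_def] using h
  simp only [sigmaWord_cons]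
  rcases h1.lt_or_eq with h1 | h1
  · exact .rel h1
  rcases h2.lt_or_eq with h2 | h2
  · exact h1 ▸ .cons (.rel h2)
  rcases h3.lt_or_eq with h3 | h3
  · exact h1 ▸ h2 ▸ .cons (.cons (.rel h3))
  exact absurd (Prod.ext h1 (Prod.ext h2 h3)) hne

lemma not_lex_sigmaWord_cons_of_le {v w : V} (h : v ≤ w) (L : List V) :
    ¬ List.Lex (· < ·) (sigmaWord (w :: L)) (sigmaWord (v :: L)) := by
  intro hlex
  rcases h.lt_or_eq with hlt | rfl
  · exact asymm hlex (lex_sigmaWord_cons_of_lt hlt L)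
  · exact asymm hlex hlex

lemma lex_sigmaWord_set_of_lt {L : List V} {ℓ : ℕ} (hℓ : ℓ < L.length) {w : V} (h : w < L[ℓ]) :
    List.Lex (· < ·) (sigmaWord (L.set ℓ w)) (sigmaWord L) := by
  induction L generalizing ℓ with
  | nil => simp at hℓ
  | cons a L ih =>
    cases ℓ with
    | zero => exact lex_sigmaWord_cons_of_lt h L
    | succ ℓ => exact .cons (.cons (.cons (ih (Nat.lt_of_succ_lt_succ hℓ) h)))

lemma not_lex_sigmaWord_set_of_le {L : List V} {ℓ : ℕ} (hℓ : ℓ < L.length) {w : V}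
    (h : L[ℓ] ≤ w) : ¬ List.Lex (· < ·) (sigmaWord (L.set ℓ w)) (sigmaWord L) := by
  induction L generalizing ℓ with
  | nil => simp at hℓ
  | cons a L ih =>
    cases ℓ with
    | zero => exact not_lex_sigmaWord_cons_of_le h L
    | succ ℓ =>
      simp only [List.set_cons_succ, sigmaWord_cons, List.lex_cons_iff]
      exact ih (Nat.lt_of_succ_lt_succ hℓ) h

lemma exists_isFacet_oPrec_of_lt {n : ℕ} {G : Finset V} (hG : IsFace n G) {L : List V}
    (hL : L.Pairwise slt) (ht : L.toFinset = G) {ℓ : ℕ} (hℓ : ℓ < L.length) {u : V}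
    (hu : u ∈ cube n) (hbelow : ∀ x ∈ G, slt x L[ℓ] → slt x u) (hlt : u < L[ℓ]) :
    ∃ H, IsFacet n H ∧ OPrec H G ∧ G.erase L[ℓ] ⊆ H := by
  have hL' : (L.set ℓ u).Pairwise slt := hL.slt_set hℓ fun x hx =>
    ⟨hbelow x (ht ▸ List.mem_toFinset.2 hx), slt_of_le_of_slt hlt.le⟩
  have hF : (L.set ℓ u).toFinset = insert u (G.erase L[ℓ]) :=
    ht ▸ List.toFinset_set_of_nodup hL.nodup hℓ u
  have hFface : IsFace n (L.set ℓ u).toFinset := by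
    refine isFace_iff.2 ⟨?_, hL'.isChain_coe_toFinset⟩
    rw [hF]
    exact insert_subset hu ((erase_subset _ _).trans (isFace_iff.1 hG).1)
  have hFcard : (L.set ℓ u).toFinset.card = G.card := by
    rw [← ht, List.toFinset_card_of_nodup hL.nodup, List.toFinset_card_of_nodup hL'.nodup,
      List.length_set]
  obtain ⟨H, hH, hFH⟩ := hFface.exists_isFacet_superset
  refine ⟨H, hH, ?_, (subset_insert _ _).trans (hF ▸ hFH)⟩
  rcases (card_le_card hFH).lt_or_eq with hlt' | heq
  · exact .inl (hFcard ▸ hlt')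
  · have hHF : (L.set ℓ u).toFinset = H := eq_of_subset_of_card_le hFH heq.ge
    exact .inr ⟨hFcard ▸ heq.symm, L.set ℓ u, L, List.isChain_iff_pairwise.2 hL',
      List.isChain_iff_pairwise.2 hL, hHF, ht, lex_sigmaWord_set_of_lt hℓ hlt⟩

section Replacement

variable {n : ℕ} {G H : Finset V} {v : V}

lemma IsFacet.slt_of_mem_sdiff_erase (hG : IsFacet n G) (hH : IsFace n H)
    (hGH : G.erase v ⊆ H) {u : V} (hu : u ∈ H \ G.erase v) {x : V} (hx : x ∈ G) :
    (slt x v → slt x u) ∧ (slt v x → slt u x) := by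
  obtain ⟨huH, hu⟩ := mem_sdiff.1 hu
  by_cases huG : u ∈ G
  · obtain rfl : u = v := by simpa [huG] using hu
    exact ⟨id, id⟩
  · exact hG.slt_of_isFace_insert_erase huG (hH.mono (insert_subset huH hGH)) hx

lemma IsFacet.not_slt_of_mem_sdiff_erase (hG : IsFacet n G) (hH : IsFace n H)
    (hGH : G.erase v ⊆ H) {u : V} (hu : u ∈ H \ G.erase v) : ¬ slt v u := by
  obtain ⟨huH, hu⟩ := mem_sdiff.1 hu
  by_cases huG : u ∈ G
  · obtain rfl : u = v := by simpa [huG] using hu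
    exact slt_irrefl u
  · exact (hG.incomparable_of_isFace_insert_erase huG (hH.mono (insert_subset huH hGH))).2

lemma IsFacet.le_of_mem_sdiff_erase (hG : IsFacet n G)
    (hmin : ∀ u ∈ cube n, (∀ x ∈ G, slt x v → slt x u) → v ≤ u)
    (hH : IsFace n H) (hGH : G.erase v ⊆ H) {u : V} (hu : u ∈ H \ G.erase v) : v ≤ u :=
  hmin u ((isFace_iff.1 hH).1 (mem_sdiff.1 hu).1)
    fun _ hx => (hG.slt_of_mem_sdiff_erase hH hGH hu hx).1

lemma IsFacet.card_le_of_forall_le (hG : IsFacet n G) (hv : v ∈ G)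
    (hmin : ∀ u ∈ cube n, (∀ x ∈ G, slt x v → slt x u) → v ≤ u)
    (hH : IsFace n H) (hGH : G.erase v ⊆ H) : H.card ≤ G.card := by
  have hle (u) (hu : u ∈ H \ G.erase v) : v ≤ u := hG.le_of_mem_sdiff_erase hmin hH hGH hu
  have hnot (a) (ha : a ∈ H \ G.erase v) (b) (hb : b ∈ H \ G.erase v) : ¬ slt a b :=
    fun hab => hG.not_slt_of_mem_sdiff_erase hH hGH hb (slt_of_le_of_slt (hle a ha) hab)
  have hnew : (H \ G.erase v).card ≤ 1 := card_le_one.2 fun a ha b hb => by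
    by_contra hab
    rcases hH.2 a (mem_sdiff.1 ha).1 b (mem_sdiff.1 hb).1 hab with h | h
    exacts [hnot a ha b hb h, hnot b hb a ha h]
  have := card_le_card_sdiff_add_card (s := H) (t := G.erase v)
  have := card_erase_of_mem hv
  have := card_pos.2 ⟨v, hv⟩
  omega

lemma IsFacet.not_oPrec_of_forall_le (hG : IsFacet n G) {L : List V} (hL : L.Pairwise slt)
    (ht : L.toFinset = G) {ℓ : ℕ} (hℓ : ℓ < L.length)
    (hmin : ∀ u ∈ cube n, (∀ x ∈ G, slt x L[ℓ] → slt x u) → L[ℓ] ≤ u)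
    (hH : IsFace n H) (hGH : G.erase L[ℓ] ⊆ H) : ¬ OPrec H G := by
  have hv : L[ℓ] ∈ G := ht ▸ List.mem_toFinset.2 (List.getElem_mem hℓ)
  have hcard := hG.card_le_of_forall_le hv hmin hH hGH
  have hGpos := card_pos.2 ⟨_, hv⟩
  rintro (hlt | ⟨hcard', LH, LG, hLH, hLG, htH, htG, hlex⟩)
  · omega
  obtain ⟨w, hw⟩ : (H \ G.erase L[ℓ]).Nonempty := by
    refine sdiff_nonempty.2 fun hHG => ?_
    have := card_le_card hHG
    rw [card_erase_of_mem hv] at this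
    omega
  have hHw : insert w (G.erase L[ℓ]) = H := by
    refine eq_of_subset_of_card_le (insert_subset (mem_sdiff.1 hw).1 hGH) ?_
    rw [card_insert_of_notMem (mem_sdiff.1 hw).2, card_erase_of_mem hv]
    omega
  have hLw : (L.set ℓ w).Pairwise slt := hL.slt_set hℓ fun x hx =>
    hG.slt_of_mem_sdiff_erase hH hGH hw (ht ▸ List.mem_toFinset.2 hx)
  obtain rfl : L = LG := List.eq_of_pairwise_slt_of_toFinset_eq
    hL (List.isChain_iff_pairwise.1 hLG) (ht.trans htG.symm)
  obtain rfl : LH = L.set ℓ w := List.eq_of_pairwise_slt_of_toFinset_eq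
    (List.isChain_iff_pairwise.1 hLH) hLw
    (by rw [htH, ← hHw, List.toFinset_set_of_nodup hL.nodup hℓ, htG])
  exact not_lex_sigmaWord_set_of_le hℓ (hG.le_of_mem_sdiff_erase hmin hH hGH hw) hlex

end Replacement

theorem IsFacet.exists_oPrec_iff_exists_lt {n : ℕ} {G : Finset V} (hG : IsFacet n G)
    {L : List V} (hL : L.Pairwise slt) (ht : L.toFinset = G) {ℓ : ℕ} (hℓ : ℓ < L.length) :
    (∃ H, IsFacet n H ∧ OPrec H G ∧ G.erase L[ℓ] ⊆ H) ↔
      ∃ u ∈ cube n, (∀ x ∈ G, slt x L[ℓ] → slt x u) ∧ u < L[ℓ] := by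
  refine ⟨fun ⟨H, hH, hHG, hGH⟩ => ?_, fun ⟨u, hu, hbelow, hlt⟩ =>
    exists_isFacet_oPrec_of_lt hG.1 hL ht hℓ hu hbelow hlt⟩
  by_contra! hmin
  refine hG.not_oPrec_of_forall_le hL ht hℓ (fun u hu hbelow => ?_) hH.1 hGH hHG
  have hv : L[ℓ] ∈ cube n :=
    (isFace_iff.1 hG.1).1 (ht ▸ List.mem_toFinset.2 (List.getElem_mem hℓ))
  have hinf : u ⊓ L[ℓ] ∈ cube n := by
    simp only [cube, mem_Icc] at hu hv ⊢
    exact ⟨le_inf hu.1 hv.1, inf_le_left.trans hu.2⟩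
  -- `u ⊓ L[ℓ]` still lies above everything below `L[ℓ]`, so it cannot be strictly below `L[ℓ]`
  exact inf_eq_right.1 <| eq_of_le_of_not_lt inf_le_right
    (hmin _ hinf fun x hx hxv => slt_inf (hbelow x hx hxv) hxv)

lemma bCond_zero_iff {L : List V} (h : 0 < L.length) : BCond L 0 h ↔ ¬ L[0] ≤ 1 := by
  simp only [BCond, List.get_eq_getElem, true_and, lt_self_iff_false, zero_tsub, tsub_self,
    not_lt_zero, or_self, and_self, or_false, Prod.le_def, Prod.fst_one, Prod.snd_one, not_and,
    not_le]
  omega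

lemma bCond_succ_iff {L : List V} {k : ℕ} (h : k + 1 < L.length) :
    BCond L (k + 1) h ↔ ¬ L[k + 1] ≤ L[k] + 1 := by
  simp only [BCond, List.get_eq_getElem, Nat.add_eq_zero_iff, one_ne_zero, and_false, false_and,
    false_or, Nat.zero_lt_succ, add_tsub_cancel_right, true_and, Prod.le_def, Prod.fst_add,
    Prod.fst_one, Prod.snd_add, Prod.snd_one, not_and, not_le]
  omega

lemma bCond_iff_exists_lt {n : ℕ} {L : List V} (hL : L.Pairwise slt) {ℓ : ℕ}
    (hℓ : ℓ < L.length) (hv : L[ℓ] ∈ cube n) :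
    BCond L ℓ hℓ ↔ ∃ u ∈ cube n, (∀ x ∈ L, slt x L[ℓ] → slt x u) ∧ u < L[ℓ] := by
  simp only [cube, mem_Icc] at hv ⊢
  cases ℓ with
  | zero =>
    have hnone (x) (hx : x ∈ L) : ¬ slt x L[0] := by
      obtain ⟨i, hi, rfl⟩ := List.mem_iff_getElem.1 hx
      exact fun h => Nat.not_lt_zero _ (hL.lt_of_slt_getElem hi hℓ h)
    rw [bCond_zero_iff]
    constructor
    · intro h
      exact ⟨1, ⟨le_rfl, hv.1.trans hv.2⟩, fun x hx hxv => absurd hxv (hnone x hx),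
        lt_of_le_not_ge hv.1 h⟩
    · rintro ⟨u, hu, -, hlt⟩ h
      exact lt_irrefl _ (hlt.trans_le (h.trans hu.1))
  | succ k =>
    have hk : slt L[k] L[k + 1] := List.pairwise_iff_getElem.1 hL k (k + 1) _ hℓ (lt_add_one k)
    have hbelow (u : V) : (∀ x ∈ L, slt x L[k + 1] → slt x u) ↔ L[k] + 1 ≤ u := by
      rw [← slt_iff_add_one_le]
      refine ⟨fun h => h _ (List.getElem_mem _) hk, fun h x hx hxv => ?_⟩
      obtain ⟨i, hi, rfl⟩ := List.mem_iff_getElem.1 hx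
      have := hL.lt_of_slt_getElem hi hℓ hxv
      exact slt_of_le_of_slt (hL.getElem_le_getElem hi _ (by omega)) h
    simp only [hbelow, bCond_succ_iff]
    constructor
    · intro h
      refine ⟨L[k] + 1, ⟨?_, (slt_iff_add_one_le.1 hk).trans hv.2⟩, le_rfl, lt_of_le_not_ge
        (slt_iff_add_one_le.1 hk) h⟩
      simp
    · rintro ⟨u, -, hu, hlt⟩ h
      exact lt_irrefl _ (hlt.trans_le (h.trans hu))

theorem homology_facet_iff_BCond_general (n : ℕ) (G : Finset V) (hG : IsFacet n G)
    (L : List V) (hs : L.Chain' slt) (ht : L.toFinset = G) :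
    (∀ v ∈ G, ∃ H : Finset V, IsFacet n H ∧ OPrec H G ∧ G.erase v ⊆ H) ↔
      (∀ ℓ : ℕ, ∀ h : ℓ < L.length, BCond L ℓ h) := by
  have hL : L.Pairwise slt := List.isChain_iff_pairwise.1 hs
  have hmem (v : V) : v ∈ G ↔ v ∈ L := by rw [← ht, List.mem_toFinset]
  simp only [hmem, List.forall_mem_iff_getElem]
  refine forall₂_congr fun ℓ hℓ => ?_
  rw [hG.exists_oPrec_iff_exists_lt hL ht hℓ, bCond_iff_exists_lt hL hℓ
    ((isFace_iff.1 hG.1).1 ((hmem _).2 (List.getElem_mem hℓ)))]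
  simp only [hmem]

/-- Lemma 6.1: a facet `G` of `Δ(n)` with at least two vertices is a homology facet
(i.e. attaches along its whole boundary in the shelling order `O`) if and only if all
of its vertices satisfy the B-condition. -/
theorem homology_facet_iff_BCond (n : ℕ) (hn : 1 ≤ n) (G : Finset V)
    (hG : IsFacet n G) (hr : 2 ≤ G.card)
    (L : List V) (hs : L.Chain' slt) (ht : L.toFinset = G) :
    (∀ v ∈ G, ∃ H : Finset V, IsFacet n H ∧ OPrec H G ∧ G.erase v ⊆ H) ↔
      (∀ ℓ : ℕ, ∀ h : ℓ < L.length, BCond L ℓ h) :=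
  homology_facet_iff_BCond_general n G hG L hs ht
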